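/- For every positive integer n ≥ 2 and every m ≥ 2, the sequence defined by u_1 = 1/(n+2), u_2 = 2/(n+1)^2 and u_i = 1/s_{i-2}(l) for i ≥ 3, where l = n(n+1)^2(n+2)/2, satisfies ∑_{i=1}^{m} u_i + (1/n)·∏_{i=1}^{m} u_i = 1/n. -/
import Mathlib


open Filter Topology Finset

/-- `sylv n i` is the generalized Sylvester sequence term `s_{i+1}(n)`:
`s_1(n) = n + 1` and `s_{i+1}(n) = s_i(n)^2 - s_i(n) + 1`. -/
def sylv (n : ℕ) : ℕ → ℕ
  | 0 => n + 1
  | i + 1 => sylv n i ^ 2 - sylv n i + 1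

lemma sylv_ge_two (n : ℕ) (hn : 1 ≤ n) : ∀ k, 2 ≤ sylv n k := by
  intro k
  induction k with
  | zero => simpa [sylv] using hn
  | succ k ih =>
    have h : sylv n k + 1 ≤ sylv n k ^ 2 := by nlinarith
    simp only [sylv]
    omega

lemma sylv_cast (n : ℕ) (k : ℕ) :
    ((sylv n (k + 1) : ℝ)) = (sylv n k : ℝ) ^ 2 - (sylv n k : ℝ) + 1 := by
  have h : sylv n k ≤ sylv n k ^ 2 := Nat.le_self_pow (by norm_num) _
  simp only [sylv]
  push_cast [Nat.cast_sub h]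
  ring

lemma prod_eq (n : ℕ) (hn : 2 ≤ n) (m : ℕ) (hm : 2 ≤ m) :
    (∏ i ∈ Finset.range m,
        (if i = 0 then (1 : ℝ) / ((n : ℝ) + 2) else if i = 1 then 2 / ((n : ℝ) + 1) ^ 2
          else 1 / (sylv (n * (n + 1) ^ 2 * (n + 2) / 2) (i - 2) : ℝ)))
      = (n : ℝ) / ((sylv (n * (n + 1) ^ 2 * (n + 2) / 2) (m - 2) : ℝ) - 1) := by
  set L := n * (n + 1) ^ 2 * (n + 2) / 2 with hL
  have hdvd : 2 ∣ n * (n + 1) ^ 2 * (n + 2) := by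
    rcases Nat.even_mul_succ_self n with ⟨c, hc⟩
    exact ⟨c * (n + 1) * (n + 2), by ring_nf; nlinarith⟩
  have hL2 : 2 * L = n * (n + 1) ^ 2 * (n + 2) := by
    rw [hL, Nat.mul_div_cancel' hdvd]
  have hLR : (2 : ℝ) * L = (n : ℝ) * ((n : ℝ) + 1) ^ 2 * ((n : ℝ) + 2) := by
    exact_mod_cast congrArg (fun x : ℕ => (x : ℝ)) hL2
  have hpos : 0 < n * (n + 1) ^ 2 * (n + 2) := by positivity
  have hL1 : 1 ≤ L := by omega
  have hnR : (0 : ℝ) < n := by positivity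
  induction m with
  | zero => omega
  | succ m ih =>
    rcases Nat.lt_or_ge m 2 with hm2 | hm2
    · -- m + 1 = 2, so m = 1
      interval_cases m
      · omega
      · have h0 : (sylv L 0 : ℝ) = (L : ℝ) + 1 := by simp [sylv]
        have hL0 : (0 : ℝ) < (L : ℝ) := by exact_mod_cast hL1
        simp only [Finset.prod_range_succ, Finset.prod_range_one]
        norm_num [h0]
        field_simp
        nlinarith [hLR]
    · have ih' := ih hm2
      rw [Finset.prod_range_succ, ih']
      have hk : m - 2 + 1 = m + 1 - 2 := by omega
      have hm0 : ¬ (m = 0) := by omega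
      have hm1 : ¬ (m = 1) := by omega
      simp only [hm0, hm1, if_false]
      set s : ℝ := (sylv L (m - 2) : ℝ) with hs
      have hs2 : (2 : ℝ) ≤ s := by rw [hs]; exact_mod_cast sylv_ge_two L hL1 (m - 2)
      have hrec : ((sylv L (m + 1 - 2) : ℝ)) = s ^ 2 - s + 1 := by
        rw [← hk]; exact sylv_cast L (m - 2)
      rw [hrec]
      have h1 : s ≠ 0 := by linarith
      have h2 : s - 1 ≠ 0 := by linarith
      have h3 : s ^ 2 - s + 1 - 1 = s * (s - 1) := by ring
      rw [h3, div_mul_div_comm, mul_one, mul_comm (s - 1) s]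

/-- For `n ≥ 2`, `m ≥ 2` and `l = n(n+1)²(n+2)/2`, the sequence `u₁ = 1/(n+2)`,
`u₂ = 2/(n+1)²`, `uᵢ = 1/s_{i-2}(l)` for `i ≥ 3` satisfies
`∑_{i=1}^m uᵢ + (1/n)·∏_{i=1}^m uᵢ = 1/n` (here `sylv l k = s_{k+1}(l)` and the
sequence is `0`-indexed: term `i` is `u_{i+1}`). -/
theorem comparison_sequence_eq (n : ℕ) (hn : 2 ≤ n) (m : ℕ) (hm : 2 ≤ m) :
    (∑ i ∈ Finset.range m,
        (if i = 0 then (1 : ℝ) / ((n : ℝ) + 2) else if i = 1 then 2 / ((n : ℝ) + 1) ^ 2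
          else 1 / (sylv (n * (n + 1) ^ 2 * (n + 2) / 2) (i - 2) : ℝ))) +
      1 / (n : ℝ) * (∏ i ∈ Finset.range m,
        (if i = 0 then (1 : ℝ) / ((n : ℝ) + 2) else if i = 1 then 2 / ((n : ℝ) + 1) ^ 2
          else 1 / (sylv (n * (n + 1) ^ 2 * (n + 2) / 2) (i - 2) : ℝ)))
      = 1 / (n : ℝ) := by
  set L := n * (n + 1) ^ 2 * (n + 2) / 2 with hL
  have hdvd : 2 ∣ n * (n + 1) ^ 2 * (n + 2) := by
    rcases Nat.even_mul_succ_self n with ⟨c, hc⟩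
    exact ⟨c * (n + 1) * (n + 2), by ring_nf; nlinarith⟩
  have hL2 : 2 * L = n * (n + 1) ^ 2 * (n + 2) := by
    rw [hL, Nat.mul_div_cancel' hdvd]
  have hLR : (2 : ℝ) * L = (n : ℝ) * ((n : ℝ) + 1) ^ 2 * ((n : ℝ) + 2) := by
    exact_mod_cast congrArg (fun x : ℕ => (x : ℝ)) hL2
  have hpos : 0 < n * (n + 1) ^ 2 * (n + 2) := by positivity
  have hL1 : 1 ≤ L := by omega
  have hnR : (0 : ℝ) < n := by positivity
  have hn0 : (n : ℝ) ≠ 0 := ne_of_gt hnR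
  induction m with
  | zero => omega
  | succ m ih =>
    rcases Nat.lt_or_ge m 2 with hm2 | hm2
    · interval_cases m
      · omega
      · simp only [Finset.prod_range_succ, Finset.prod_range_one,
          Finset.sum_range_succ, Finset.sum_range_one]
        norm_num
        field_simp
        ring
    · have ih' := ih hm2
      have hp := prod_eq n hn m hm2
      rw [← hL] at hp
      rw [hp] at ih'
      rw [Finset.sum_range_succ, Finset.prod_range_succ, hp]
      have hm0 : ¬ (m = 0) := by omega
      have hm1 : ¬ (m = 1) := by omega
      simp only [hm0, hm1, if_false]
      set s : ℝ := (sylv L (m - 2) : ℝ) with hs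
      have hs2 : (2 : ℝ) ≤ s := by rw [hs]; exact_mod_cast sylv_ge_two L hL1 (m - 2)
      have h1 : s ≠ 0 := by linarith
      have h2 : s - 1 ≠ 0 := by linarith
      have key : 1 / s + 1 / (n : ℝ) * ((n : ℝ) / (s - 1) * (1 / s))
          = 1 / (n : ℝ) * ((n : ℝ) / (s - 1)) := by
        field_simp
        ring
      linarith [key, ih']
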